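/- arXiv:1602.07134 — 17 statements merged into one kernel-verified Lean document; each statement's English description precedes it below -/
import Mathlib

section
/- Let R be a commutative ring with 1 ≠ 0 and n a positive integer. A proper ideal I of R is a weakly n-absorbing ideal if and only if for every integer m > n and elements x₁,…,x_m ∈ R with 0 ≠ x₁⋯x_m ∈ I, there exist n of the x_i's whose product lies in I. -/
/-!
Merging two factors into one does not change the product, so by induction on the number of
factors some `n` of the merged factors have product in `I`. If the merged factor is among them,
these are really `n + 1` of the original factors, whose product is nonzero because it divides
the whole product, and the defining property applied once more drops one of them.
-/

open Finset Polynomial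

/-- `I` is a weakly `n`-absorbing ideal: `I` is proper and whenever a product of `n+1`
elements is nonzero and lies in `I`, some product of `n` of them lies in `I`. -/
def WeaklyAbsorbing {R : Type*} [CommRing R] (n : ℕ) (I : Ideal R) : Prop :=
  I ≠ ⊤ ∧ ∀ a : Fin (n + 1) → R, (∏ i, a i) ≠ 0 → (∏ i, a i) ∈ I →
    ∃ j : Fin (n + 1), (∏ i ∈ univ.erase j, a i) ∈ I

/-- `I` is an `n`-absorbing ideal. -/
def Absorbing {R : Type*} [CommRing R] (n : ℕ) (I : Ideal R) : Prop :=
  I ≠ ⊤ ∧ ∀ a : Fin (n + 1) → R, (∏ i, a i) ∈ I →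
    ∃ j : Fin (n + 1), (∏ i ∈ univ.erase j, a i) ∈ I

/-- `I` is a strongly weakly `n`-absorbing ideal. -/
def StronglyWeaklyAbsorbing {R : Type*} [CommRing R] (n : ℕ) (I : Ideal R) : Prop :=
  I ≠ ⊤ ∧ ∀ J : Fin (n + 1) → Ideal R, (∏ i, J i) ≠ ⊥ → (∏ i, J i) ≤ I →
    ∃ j : Fin (n + 1), (∏ i ∈ univ.erase j, J i) ≤ I

/-- `I` is a weakly primary ideal. -/
def WeaklyPrimary {R : Type*} [CommRing R] (I : Ideal R) : Prop :=
  I ≠ ⊤ ∧ ∀ a b : R, a * b ≠ 0 → a * b ∈ I → a ∈ I ∨ b ∈ I.radical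

theorem Finset.prod_update_mul_eq_prod_insert {ι M : Type*} [CommMonoid M] [DecidableEq ι]
    {s : Finset ι} {a b : ι} (ha : a ∈ s) (hb : b ∉ s) (x : ι → M) :
    ∏ i ∈ s, Function.update x a (x a * x b) i = ∏ i ∈ insert b s, x i := by
  rw [prod_update_of_mem ha, prod_insert hb, sdiff_singleton_eq_erase, ← mul_prod_erase s x ha,
    mul_right_comm, mul_comm (x b)]

namespace WeaklyAbsorbing

variable {R ι : Type*} [CommRing R] {n : ℕ} {I : Ideal R}

theorem exists_subset_card_eq_of_card_eq_succ (h : WeaklyAbsorbing n I) {s : Finset ι}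
    (x : ι → R) (hs : s.card = n + 1) (h0 : ∏ i ∈ s, x i ≠ 0) (hI : ∏ i ∈ s, x i ∈ I) :
    ∃ t ⊆ s, t.card = n ∧ ∏ i ∈ t, x i ∈ I := by
  obtain ⟨f, rfl⟩ :=
    Function.Embedding.exists_of_card_eq_finset (α := Fin (n + 1)) (by simpa using hs.symm)
  rw [prod_map] at h0 hI
  obtain ⟨j, hj⟩ := h.2 (x ∘ f) h0 hI
  exact ⟨(univ.erase j).map f, map_subset_map.2 (erase_subset j univ), by simp,
    by rwa [prod_map]⟩

theorem exists_subset_card_eq_of_lt_card (h : WeaklyAbsorbing n I) {s : Finset ι}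
    (x : ι → R) (hs : n < s.card) (h0 : ∏ i ∈ s, x i ≠ 0) (hI : ∏ i ∈ s, x i ∈ I) :
    ∃ t ⊆ s, t.card = n ∧ ∏ i ∈ t, x i ∈ I := by
  classical
  induction s using Finset.strongInduction generalizing x with
  | H s ih =>
  obtain hs | hs := (Nat.succ_le_of_lt hs).eq_or_lt
  · exact h.exists_subset_card_eq_of_card_eq_succ x hs.symm h0 hI
  obtain ⟨a, ha, b, hb, hab⟩ := one_lt_card.1 (by omega : 1 < s.card)
  set y := Function.update x a (x a * x b)
  have hy : ∏ i ∈ s.erase b, y i = ∏ i ∈ s, x i := by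
    rw [prod_update_mul_eq_prod_insert (mem_erase.2 ⟨hab, ha⟩) (notMem_erase b s),
      insert_erase hb]
  obtain ⟨t, hts, htn, htI⟩ := ih (s.erase b) (erase_ssubset hb) y
    (by rw [card_erase_of_mem hb]; omega) (hy ▸ h0) (hy ▸ hI)
  by_cases hat : a ∈ t
  · have hbt : b ∉ t := fun hbt => notMem_erase b s (hts hbt)
    have hyt := prod_update_mul_eq_prod_insert hat hbt x
    have hsub : insert b t ⊆ s := insert_subset hb (hts.trans (erase_subset b s))
    obtain ⟨t', ht', ht'n, ht'I⟩ := h.exists_subset_card_eq_of_card_eq_succ x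
      (by rw [card_insert_of_notMem hbt, htn])
      (ne_zero_of_dvd_ne_zero h0 (prod_dvd_prod_of_subset _ _ x hsub)) (hyt ▸ htI)
    exact ⟨t', ht'.trans hsub, ht'n, ht'I⟩
  · rw [prod_update_of_notMem hat] at htI
    exact ⟨t, hts.trans (erase_subset b s), htn, htI⟩

end WeaklyAbsorbing

theorem stmt0_general {R : Type*} [CommRing R] (n : ℕ)
    (I : Ideal R) (hI : I ≠ ⊤) :
    WeaklyAbsorbing n I ↔
      ∀ m : ℕ, n < m → ∀ x : Fin m → R, (∏ i, x i) ≠ 0 → (∏ i, x i) ∈ I →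
        ∃ s : Finset (Fin m), s.card = n ∧ (∏ i ∈ s, x i) ∈ I := by
  refine ⟨fun h m hm x h0 hx => ?_, fun H => ⟨hI, fun a h0 ha => ?_⟩⟩
  · obtain ⟨s, -, hs, hsI⟩ := h.exists_subset_card_eq_of_lt_card x (by simpa using hm) h0 hx
    exact ⟨s, hs, hsI⟩
  · obtain ⟨s, hs, hsI⟩ := H (n + 1) n.lt_succ_self a h0 ha
    obtain ⟨j, -, hj⟩ := exists_mem_notMem_of_card_lt_card (s := s) (t := univ) (by simp [hs])
    have hsj : s ⊆ univ.erase j := subset_erase.2 ⟨subset_univ s, hj⟩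
    exact ⟨j, I.mem_of_dvd (prod_dvd_prod_of_subset _ _ a hsj) hsI⟩

theorem stmt0 {R : Type*} [CommRing R] [Nontrivial R] (n : ℕ) (hn : 0 < n)
    (I : Ideal R) (hI : I ≠ ⊤) :
    WeaklyAbsorbing n I ↔
      ∀ m : ℕ, n < m → ∀ x : Fin m → R, (∏ i, x i) ≠ 0 → (∏ i, x i) ∈ I →
        ∃ s : Finset (Fin m), s.card = n ∧ (∏ i ∈ s, x i) ∈ I :=
  stmt0_general n I hI
end

section
/- Let R be a commutative ring, and for each 1 ≤ i ≤ k let I_i be a weakly n_i-absorbing ideal of R. Then I₁ ∩ ⋯ ∩ I_k is a weakly n-absorbing ideal of R for n = n₁ + ⋯ + n_k. -/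
/-!
A weakly `n`-absorbing ideal containing a nonzero product of at least `n` factors contains
the product of some `n` of them: lumping all but `n` of the factors into a single one leaves
`n + 1` factors, one of which can be dropped, and one iterates. Applied to each `I i`, this gives
index sets `S i` with `#(S i) = n i` and `∏_{S i} a ∈ I i`. Their union has at most `∑ i, n i`
elements, so some index `j` lies in none of them, and the product omitting `a j` lies in every
`I i`.
-/

open Finset Polynomial

namespace WeaklyAbsorbing

variable {R ι : Type*} [CommRing R] [DecidableEq ι] {n : ℕ} {I : Ideal R}

lemma exists_prod_erase_mem_of_card_eq (hI : WeaklyAbsorbing n I) {s : Finset ι}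
    (hs : #s = n + 1) (a : ι → R) (h0 : ∏ i ∈ s, a i ≠ 0) (hmem : ∏ i ∈ s, a i ∈ I) :
    ∃ j ∈ s, ∏ i ∈ s.erase j, a i ∈ I := by
  let e : Fin (n + 1) ≃ s := (s.equivFinOfCardEq hs).symm
  have hprod : ∏ i, a (e i) = ∏ i ∈ s, a i := by
    rw [e.prod_comp (fun i => a i), Finset.prod_coe_sort]
  obtain ⟨j, hj⟩ := hI.2 (fun i => a (e i)) (hprod ▸ h0) (hprod ▸ hmem)
  refine ⟨e j, (e j).2, ?_⟩
  convert hj using 1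
  refine (prod_bij (fun i _ => (e i : ι)) ?_ ?_ ?_ fun _ _ => rfl).symm
  · intro i hi
    simpa [Subtype.val_inj, e.injective.eq_iff] using hi
  · intro i _ i' _ h
    exact e.injective (Subtype.val_injective h)
  · intro x hx
    obtain ⟨hxj, hxs⟩ := mem_erase.1 hx
    refine ⟨e.symm ⟨x, hxs⟩, mem_erase.2 ⟨fun h => hxj ?_, mem_univ _⟩, by simp⟩
    rw [← h]; simp

lemma exists_prod_erase_mem (hI : WeaklyAbsorbing n I) (a : ι → R) {T : Finset ι}
    (hT : n < #T) (h0 : ∏ i ∈ T, a i ≠ 0) (hmem : ∏ i ∈ T, a i ∈ I) :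
    ∃ x ∈ T, ∏ i ∈ T.erase x, a i ∈ I := by
  obtain ⟨U, hUT, hU⟩ := exists_subset_card_eq hT.le
  obtain ⟨y, hyT, hyU⟩ := exists_mem_notMem_of_card_lt_card (hU ▸ hT)
  set b := Function.update a y (∏ i ∈ T \ U, a i)
  have hbV : ∀ V ⊆ U, ∏ i ∈ V, b i = ∏ i ∈ V, a i := fun V hVU =>
    prod_congr rfl fun i hi => Function.update_of_ne (by rintro rfl; exact hyU (hVU hi)) _ _
  have hb : ∀ V ⊆ U, ∏ i ∈ insert y V, b i = (∏ i ∈ T \ U, a i) * ∏ i ∈ V, a i := by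
    intro V hVU
    rw [prod_insert (fun h => hyU (hVU h)), hbV V hVU]
    simp only [b, Function.update_self]
  obtain ⟨j, hjs, hj⟩ := hI.exists_prod_erase_mem_of_card_eq (s := insert y U)
    (by rw [card_insert_of_notMem hyU, hU]) _
    (by rwa [hb U subset_rfl, prod_sdiff hUT]) (by rwa [hb U subset_rfl, prod_sdiff hUT])
  rcases mem_insert.1 hjs with hjy | hjU
  · refine ⟨y, hyT, Ideal.mem_of_dvd _ (prod_dvd_prod_of_subset U _ a ?_) ?_⟩
    · exact fun i hi => mem_erase.2 ⟨fun h => hyU (h ▸ hi), hUT hi⟩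
    · rwa [hjy, erase_insert hyU, hbV U subset_rfl] at hj
  · have hjy : j ≠ y := fun h => hyU (h ▸ hjU)
    refine ⟨j, hUT hjU, ?_⟩
    rw [erase_insert_of_ne hjy.symm, hb _ (erase_subset _ _)] at hj
    have hsdiff : T.erase j \ U.erase j = T \ U := by
      ext x; simp only [mem_sdiff, mem_erase]; grind
    rwa [← hsdiff, prod_sdiff (erase_subset_erase _ hUT)] at hj

lemma exists_subset_card_eq_prod_mem (hI : WeaklyAbsorbing n I) (a : ι → R) {T : Finset ι}
    (hT : n ≤ #T) (h0 : ∏ i ∈ T, a i ≠ 0) (hmem : ∏ i ∈ T, a i ∈ I) :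
    ∃ S ⊆ T, #S = n ∧ ∏ i ∈ S, a i ∈ I := by
  induction T using Finset.strongInduction with
  | H T ih =>
    rcases hT.eq_or_lt with hT | hT
    · exact ⟨T, subset_rfl, hT.symm, hmem⟩
    obtain ⟨x, hx, hxI⟩ := hI.exists_prod_erase_mem a hT h0 hmem
    have h0' : ∏ i ∈ T.erase x, a i ≠ 0 := fun h =>
      h0 (by rw [← prod_erase_mul _ _ hx, h, zero_mul])
    obtain ⟨S, hST, hSn, hSI⟩ :=
      ih _ (erase_ssubset hx) (by rw [card_erase_of_mem hx]; omega) h0' hxI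
    exact ⟨S, hST.trans (erase_subset _ _), hSn, hSI⟩

end WeaklyAbsorbing

theorem stmt2_general {R : Type*} [CommRing R] (k : ℕ) (hk : 0 < k)
    (I : Fin k → Ideal R) (n : Fin k → ℕ)
    (h : ∀ i, WeaklyAbsorbing (n i) (I i)) :
    WeaklyAbsorbing (∑ i, n i) (⨅ i, I i) := by
  refine ⟨fun htop => (h ⟨0, hk⟩).1 (top_le_iff.1 (htop ▸ iInf_le I _)),
    fun a h0 hmem => ?_⟩
  have hS : ∀ i, ∃ S ⊆ univ, #S = n i ∧ ∏ x ∈ S, a x ∈ I i := fun i => by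
    refine (h i).exists_subset_card_eq_prod_mem a ?_ h0 (Ideal.mem_iInf.1 hmem i)
    rw [card_univ, Fintype.card_fin]
    exact (single_le_sum (fun j _ => (n j).zero_le) (mem_univ i)).trans (Nat.le_succ _)
  choose S _ hSn hSI using hS
  have hcard : #(univ.biUnion S) < #(univ : Finset (Fin (∑ i, n i + 1))) := calc
    #(univ.biUnion S) ≤ ∑ i, #(S i) := card_biUnion_le
    _ = ∑ i, n i := sum_congr rfl fun i _ => hSn i
    _ < _ := by simp
  obtain ⟨j, -, hj⟩ := exists_mem_notMem_of_card_lt_card hcard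
  refine ⟨j, Ideal.mem_iInf.2 fun i =>
    Ideal.mem_of_dvd _ (prod_dvd_prod_of_subset _ _ a fun x hx => ?_) (hSI i)⟩
  exact mem_erase.2 ⟨by rintro rfl; exact hj (mem_biUnion.2 ⟨i, mem_univ _, hx⟩),
    mem_univ _⟩

theorem stmt2 {R : Type*} [CommRing R] [Nontrivial R] (k : ℕ) (hk : 0 < k)
    (I : Fin k → Ideal R) (n : Fin k → ℕ) (hn : ∀ i, 0 < n i)
    (h : ∀ i, WeaklyAbsorbing (n i) (I i)) :
    WeaklyAbsorbing (∑ i, n i) (⨅ i, I i) :=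
  stmt2_general k hk I n h
end

section
/- Let I be a proper ideal of a commutative ring R. Then I is strongly weakly n-absorbing if and only if for all ideals I₁,…,I_{n+1} of R with I ⊆ I₁ and 0 ≠ I₁⋯I_{n+1} ⊆ I, there are n of the I_i's whose product is contained in I. -/
open Finset Polynomial

/-! Replacing `J 0` by `J 0 ⊔ I` only enlarges the products of the `J i`, while the full product
stays inside `I` because `I * ∏_{i ≠ 0} J i ≤ I`. So the restricted condition, applied to the
enlarged family, yields the unrestricted one. -/

theorem Ideal.prod_update_sup_le {R ι : Type*} [CommRing R] [Fintype ι] [DecidableEq ι]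
    {J : ι → Ideal R} {I : Ideal R} (k : ι) (h : ∏ i, J i ≤ I) :
    ∏ i, Function.update J k (J k ⊔ I) i ≤ I := by
  rw [prod_update_of_mem (mem_univ k), Ideal.sup_mul]
  refine sup_le ?_ Ideal.mul_le_left
  rwa [← prod_eq_mul_prod_sdiff_singleton_of_mem (mem_univ k) J]

theorem stmt3_general {R : Type*} [CommRing R] (n : ℕ)
    (I : Ideal R) (hI : I ≠ ⊤) :
    StronglyWeaklyAbsorbing n I ↔
      ∀ J : Fin (n + 1) → Ideal R, I ≤ J 0 → (∏ i, J i) ≠ ⊥ → (∏ i, J i) ≤ I →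
        ∃ j : Fin (n + 1), (∏ i ∈ univ.erase j, J i) ≤ I := by
  refine ⟨fun h J _ ↦ h.2 J, fun h ↦ ⟨hI, fun J hne hle ↦ ?_⟩⟩
  set J' := Function.update J 0 (J 0 ⊔ I)
  have hJJ' : J ≤ J' := le_update_self_iff.mpr le_sup_left
  have hmono (s : Finset (Fin (n + 1))) : ∏ i ∈ s, J i ≤ ∏ i ∈ s, J' i :=
    prod_le_prod' fun i _ ↦ hJJ' i
  obtain ⟨j, hj⟩ := h J' (by simp [J']) (ne_bot_of_le_ne_bot hne (hmono univ))
    (Ideal.prod_update_sup_le 0 hle)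
  exact ⟨j, (hmono _).trans hj⟩

theorem stmt3 {R : Type*} [CommRing R] [Nontrivial R] (n : ℕ) (hn : 0 < n)
    (I : Ideal R) (hI : I ≠ ⊤) :
    StronglyWeaklyAbsorbing n I ↔
      ∀ J : Fin (n + 1) → Ideal R, I ≤ J 0 → (∏ i, J i) ≠ ⊥ → (∏ i, J i) ≤ I →
        ∃ j : Fin (n + 1), (∏ i ∈ univ.erase j, J i) ≤ I :=
  stmt3_general n I hI
end

section
/- Let R be a commutative ring, J a weakly n-absorbing ideal of R, and I an ideal of R with I ⊆ J. Then J/I is a weakly n-absorbing ideal of R/I. -/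
open Finset Polynomial

/-! Lift the factors along the surjection `R → R/I`: because `I ≤ J`, the lifted product lies in
`J`, and it is nonzero because its image is. -/

section

variable {R S : Type*} [CommRing R] [CommRing S] {f : R →+* S} {J : Ideal R}

theorem Ideal.comap_map_eq_of_surjective_of_ker_le (hf : Function.Surjective f)
    (hJ : RingHom.ker f ≤ J) : (J.map f).comap f = J := by
  rw [Ideal.comap_map_of_surjective' f hf, sup_eq_left.2 hJ]

theorem WeaklyAbsorbing.map_of_surjective {n : ℕ} (hf : Function.Surjective f)
    (hJ : RingHom.ker f ≤ J) (h : WeaklyAbsorbing n J) : WeaklyAbsorbing n (J.map f) := by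
  have hcomap := Ideal.comap_map_eq_of_surjective_of_ker_le hf hJ
  refine ⟨fun htop => h.1 (by rw [← hcomap, htop, Ideal.comap_top]), fun a hne hmem => ?_⟩
  choose b hb using fun i => hf (a i)
  obtain rfl : (fun i => f (b i)) = a := funext hb
  rw [← map_prod] at hne hmem
  have hbJ : ∏ i, b i ∈ J := by rwa [← hcomap, Ideal.mem_comap]
  obtain ⟨j, hj⟩ := h.2 b (fun h0 => hne (by rw [h0, map_zero])) hbJ
  exact ⟨j, by rw [← map_prod]; exact Ideal.mem_map_of_mem f hj⟩

end

theorem stmt4_general {R : Type*} [CommRing R] (n : ℕ) (I J : Ideal R)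
    (hIJ : I ≤ J) (h : WeaklyAbsorbing n J) :
    WeaklyAbsorbing n (J.map (Ideal.Quotient.mk I)) :=
  h.map_of_surjective Ideal.Quotient.mk_surjective (by rwa [Ideal.mk_ker])

theorem stmt4 {R : Type*} [CommRing R] (n : ℕ) (hn : 0 < n) (I J : Ideal R)
    (hIJ : I ≤ J) (h : WeaklyAbsorbing n J) :
    WeaklyAbsorbing n (J.map (Ideal.Quotient.mk I)) :=
  stmt4_general n I J hIJ h
end

section
/- Let R be a commutative ring, J a weakly n-absorbing ideal of R, and S a multiplicatively closed subset of R with J ∩ S = ∅. Then the extension J_S of J to the localization R_S is a weakly n-absorbing ideal of R_S. -/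
open Finset Polynomial

/-- If `a i * s i = r i` and `u * ∏ r ∈ J` with `u ∈ S`, take `c i = u * r i`, `w i = u * s i`. -/
theorem IsLocalization.exists_algebraMap_eq_mul_units_of_prod_mem_map {R A ι : Type*}
    [CommRing R] [CommRing A] [Algebra R A] [Fintype ι] [Nonempty ι]
    (S : Submonoid R) [IsLocalization S A] {J : Ideal R} {a : ι → A}
    (ha : ∏ i, a i ∈ J.map (algebraMap R A)) :
    ∃ c : ι → R, ∃ w : ι → Aˣ,
      (∀ i, algebraMap R A (c i) = a i * w i) ∧ ∏ i, c i ∈ J := by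
  choose p hp using fun i => IsLocalization.surj S (a i)
  have hprod : algebraMap R A (∏ i, (p i).1) = (∏ i, a i) * ∏ i, algebraMap R A (p i).2 := by
    simp only [map_prod, ← hp, prod_mul_distrib]
  obtain ⟨u, hu, huJ⟩ := (IsLocalization.algebraMap_mem_map_algebraMap_iff S A J _).1
    (hprod ▸ Ideal.mul_mem_right _ _ ha)
  refine ⟨fun i => u * (p i).1,
    fun i => (IsLocalization.map_units A (⟨u, hu⟩ * (p i).2)).unit, fun i => ?_, ?_⟩
  · simp only [IsUnit.unit_spec, Submonoid.coe_mul, map_mul, ← hp]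
    ring
  · obtain ⟨k, hk⟩ := Nat.exists_eq_add_one_of_ne_zero (Fintype.card_ne_zero (α := ι))
    rw [prod_mul_distrib, prod_const, card_univ, hk, pow_succ, mul_assoc]
    exact J.mul_mem_left _ huJ

theorem stmt5_general {R : Type*} [CommRing R] (n : ℕ) (J : Ideal R)
    (S : Submonoid R) (hS : ∀ s ∈ S, s ∉ J)
    (A : Type*) [CommRing A] [Algebra R A] [IsLocalization S A]
    (h : WeaklyAbsorbing n J) :
    WeaklyAbsorbing n (J.map (algebraMap R A)) := by
  refine ⟨(IsLocalization.map_algebraMap_ne_top_iff_disjoint S A J).2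
    (Set.disjoint_left.2 hS), fun a hne hmem => ?_⟩
  obtain ⟨c, w, hc, hcJ⟩ :=
    IsLocalization.exists_algebraMap_eq_mul_units_of_prod_mem_map S hmem
  have hmap (F : Finset (Fin (n + 1))) :
      algebraMap R A (∏ i ∈ F, c i) = (∏ i ∈ F, a i) * ↑(∏ i ∈ F, w i) := by
    simp only [map_prod, hc, prod_mul_distrib, Units.coe_prod]
  have hcne : ∏ i, c i ≠ 0 := fun h0 =>
    hne <| (Units.mul_left_eq_zero _).1 (by rw [← hmap, h0, map_zero])
  obtain ⟨j, hj⟩ := h.2 c hcne hcJ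
  refine ⟨j, (Ideal.mul_unit_mem_iff_mem _ (Units.isUnit (∏ i ∈ univ.erase j, w i))).1 ?_⟩
  exact hmap _ ▸ Ideal.mem_map_of_mem _ hj

theorem stmt5 {R : Type*} [CommRing R] (n : ℕ) (hn : 0 < n) (J : Ideal R)
    (S : Submonoid R) (hS : ∀ s ∈ S, s ∉ J)
    (A : Type*) [CommRing A] [Algebra R A] [IsLocalization S A]
    (h : WeaklyAbsorbing n J) :
    WeaklyAbsorbing n (J.map (algebraMap R A)) :=
  stmt5_general n J S hS A h
end

section
/- Let I ⊆ J be proper ideals of a commutative ring R. If I is a weakly n-absorbing ideal of R and J/I is a weakly n-absorbing ideal of R/I, then J is a weakly n-absorbing ideal of R. -/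
open Finset Polynomial

theorem Ideal.Quotient.prod_mk_mem_map_iff {R ι : Type*} [CommRing R] {I J : Ideal R}
    (hIJ : I ≤ J) (s : Finset ι) (a : ι → R) :
    (∏ i ∈ s, Ideal.Quotient.mk I (a i)) ∈ J.map (Ideal.Quotient.mk I) ↔ (∏ i ∈ s, a i) ∈ J := by
  rw [← map_prod, Ideal.mem_quotient_iff_mem hIJ]

theorem stmt6_general {R : Type*} [CommRing R] (n : ℕ) (I J : Ideal R)
    (hIJ : I ≤ J) (hJ : J ≠ ⊤) (hI : WeaklyAbsorbing n I)
    (hQ : WeaklyAbsorbing n (J.map (Ideal.Quotient.mk I))) :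
    WeaklyAbsorbing n J := by
  refine ⟨hJ, fun a hne hmem => ?_⟩
  by_cases hmemI : (∏ i, a i) ∈ I
  · obtain ⟨j, hj⟩ := hI.2 a hne hmemI
    exact ⟨j, hIJ hj⟩
  · have hne' : (∏ i, Ideal.Quotient.mk I (a i)) ≠ 0 := by
      rwa [← map_prod, Ne, Ideal.Quotient.eq_zero_iff_mem]
    obtain ⟨j, hj⟩ := hQ.2 _ hne' ((Ideal.Quotient.prod_mk_mem_map_iff hIJ _ a).2 hmem)
    exact ⟨j, (Ideal.Quotient.prod_mk_mem_map_iff hIJ _ a).1 hj⟩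

theorem stmt6 {R : Type*} [CommRing R] (n : ℕ) (hn : 0 < n) (I J : Ideal R)
    (hIJ : I ≤ J) (hJ : J ≠ ⊤) (hI : WeaklyAbsorbing n I)
    (hQ : WeaklyAbsorbing n (J.map (Ideal.Quotient.mk I))) :
    WeaklyAbsorbing n J :=
  stmt6_general n I J hIJ hJ hI hQ
end

section
/- Let I be an ideal of an integral domain R. Then the ideal ⟨I, X⟩ of R[X] generated by I and X is a weakly n-absorbing ideal of R[X] if and only if I is a weakly n-absorbing ideal of R. -/
open Finset Polynomial

/-! `⟨I, X⟩` is the preimage of `I` under `constantCoeff`, and `I` is in turn its preimage under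
`C`. Weak `n`-absorption pulls back along the injective map `C`, and along any ring map `f` into a
domain: if the images of the factors multiply to `0`, one image is `0`, and since `n > 0` it
survives in some `n`-fold subproduct, whose image is then `0 ∈ I`. -/

namespace Ideal

variable {R : Type*} [CommRing R]

theorem map_C_sup_span_X_eq_comap_constantCoeff (I : Ideal R) :
    I.map C ⊔ span {X} = I.comap (constantCoeff : R[X] →+* R) := by
  refine le_antisymm (sup_le (map_le_iff_le_comap.mpr fun a ha => by simpa using ha) ?_)
    fun f hf => ?_
  · rw [span_le, Set.singleton_subset_iff]
    simp
  · rw [← X_mul_divX_add f]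
    exact add_mem (mul_mem_right _ _ (mem_sup_right (subset_span rfl)))
      (mem_sup_left (mem_map_of_mem _ hf))

theorem comap_C_comap_constantCoeff (I : Ideal R) :
    (I.comap (constantCoeff : R[X] →+* R)).comap C = I := by
  ext a
  simp

end Ideal

theorem Finset.exists_prod_erase_eq_zero {M : Type*} [CommMonoidWithZero M] [Nontrivial M]
    [NoZeroDivisors M] {n : ℕ} (hn : 0 < n) {a : Fin (n + 1) → M} (h : ∏ i, a i = 0) :
    ∃ k, ∏ i ∈ univ.erase k, a i = 0 := by
  obtain ⟨j, -, hj⟩ := prod_eq_zero_iff.mp h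
  have : Nontrivial (Fin (n + 1)) := Fin.nontrivial_iff_two_le.mpr (by omega)
  obtain ⟨k, hk⟩ := exists_ne j
  exact ⟨k, prod_eq_zero (mem_erase.mpr ⟨hk.symm, mem_univ j⟩) hj⟩

namespace WeaklyAbsorbing

variable {R S : Type*} [CommRing R] [CommRing S] {n : ℕ}

theorem comap_of_injective {J : Ideal S} (hJ : WeaklyAbsorbing n J) {f : R →+* S}
    (hf : Function.Injective f) : WeaklyAbsorbing n (J.comap f) := by
  refine ⟨Ideal.comap_ne_top f hJ.1, fun a ha haJ => ?_⟩
  have hne : ∏ i, f (a i) ≠ 0 := by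
    rwa [← map_prod, map_ne_zero_iff f hf]
  obtain ⟨j, hj⟩ := hJ.2 (fun i => f (a i)) hne (by rwa [← map_prod])
  exact ⟨j, by rwa [Ideal.mem_comap, map_prod]⟩

theorem comap [IsDomain R] (hn : 0 < n) {I : Ideal R} (hI : WeaklyAbsorbing n I) (f : S →+* R) :
    WeaklyAbsorbing n (I.comap f) := by
  refine ⟨Ideal.comap_ne_top f hI.1, fun a _ haI => ?_⟩
  simp only [Ideal.mem_comap, map_prod] at haI ⊢
  by_cases h0 : ∏ i, f (a i) = 0
  · obtain ⟨k, hk⟩ := exists_prod_erase_eq_zero hn h0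
    exact ⟨k, hk ▸ I.zero_mem⟩
  · exact hI.2 (fun i => f (a i)) h0 haI

end WeaklyAbsorbing

theorem stmt7 {R : Type*} [CommRing R] [IsDomain R] (n : ℕ) (hn : 0 < n)
    (I : Ideal R) :
    WeaklyAbsorbing n
        (I.map (Polynomial.C : R →+* Polynomial R) ⊔ Ideal.span {Polynomial.X}) ↔
      WeaklyAbsorbing n I := by
  rw [Ideal.map_C_sup_span_X_eq_comap_constantCoeff]
  refine ⟨fun h => ?_, fun h => h.comap hn constantCoeff⟩
  simpa only [Ideal.comap_C_comap_constantCoeff] using h.comap_of_injective C_injective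
end

section
/- Let I be a weakly primary ideal of a commutative ring R, and suppose that (√I)ⁿ ⊆ I for some positive integer n. Then I is a weakly n-absorbing ideal of R. -/
open Finset Polynomial

theorem Ideal.prod_mem_pow_card {R ι : Type*} [CommSemiring R] {J : Ideal R} {s : Finset ι}
    {f : ι → R} (h : ∀ i ∈ s, f i ∈ J) : ∏ i ∈ s, f i ∈ J ^ s.card := by
  simpa using Ideal.prod_mem_prod h

theorem WeaklyPrimary.mem_radical_of_prod_erase_notMem {R ι : Type*} [CommRing R] [Fintype ι]
    [DecidableEq ι] {I : Ideal R} (hI : WeaklyPrimary I) {a : ι → R} (hne : ∏ i, a i ≠ 0)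
    (hmem : ∏ i, a i ∈ I) (j : ι) (hj : ∏ i ∈ univ.erase j, a i ∉ I) : a j ∈ I.radical := by
  rw [← Finset.prod_erase_mul _ _ (mem_univ j)] at hne hmem
  exact (hI.2 _ _ hne hmem).resolve_left hj

theorem stmt8_general {R : Type*} [CommRing R] (n : ℕ) (I : Ideal R)
    (hprim : WeaklyPrimary I) (hrad : I.radical ^ n ≤ I) :
    WeaklyAbsorbing n I := by
  refine ⟨hprim.1, fun a hne hmem => ?_⟩
  by_contra! hnot
  have hall : ∀ j, a j ∈ I.radical :=
    fun j => hprim.mem_radical_of_prod_erase_notMem hne hmem j (hnot j)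
  have hprod : ∏ i ∈ univ.erase 0, a i ∈ I.radical ^ n := by
    simpa using Ideal.prod_mem_pow_card (s := univ.erase 0) fun i _ => hall i
  exact hnot 0 (hrad hprod)

theorem stmt8 {R : Type*} [CommRing R] (n : ℕ) (hn : 0 < n) (I : Ideal R)
    (hprim : WeaklyPrimary I) (hrad : I.radical ^ n ≤ I) :
    WeaklyAbsorbing n I :=
  stmt8_general n I hprim hrad
end

section
/- Let R be a commutative ring whose zero ideal is an n-absorbing ideal (e.g., an integral domain). Then every weakly n-absorbing ideal of R is an n-absorbing ideal of R. -/
open Finset Polynomial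

theorem stmt9_general {R : Type*} [CommRing R] (n : ℕ)
    (h0 : Absorbing n (⊥ : Ideal R)) (I : Ideal R) (hI : WeaklyAbsorbing n I) :
    Absorbing n I := by
  refine ⟨hI.1, fun a ha => ?_⟩
  by_cases hzero : ∏ i, a i = 0
  · obtain ⟨j, hj⟩ := h0.2 a (Ideal.mem_bot.2 hzero)
    exact ⟨j, Ideal.mem_bot.1 hj ▸ I.zero_mem⟩
  · exact hI.2 a hzero ha

theorem stmt9 {R : Type*} [CommRing R] (n : ℕ) (hn : 0 < n)
    (h0 : Absorbing n (⊥ : Ideal R)) (I : Ideal R) (hI : WeaklyAbsorbing n I) :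
    Absorbing n I :=
  stmt9_general n h0 I hI
end

section
/- Let P be a divided weakly prime ideal of a commutative ring R, and let I be a weakly n-absorbing ideal of R with √I = P. Then I is a weakly primary ideal of R. -/
open Finset Polynomial

/-!
Let `0 ≠ ab ∈ I` with `b ∉ √I = P`. Then `a ∈ P` since `P` is weakly prime, and `bⁿ ∉ P`, so
`P ⊊ (bⁿ)` because `P` is divided; hence `a = c bⁿ`. Now `ab = (cb) · b ⋯ b` is a nonzero product
of `n + 1` factors in `I`, so either `bⁿ ∈ I ⊆ P`, which is impossible, or `cbⁿ = a ∈ I`.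
-/

theorem prod_ite_zero_mul {M : Type*} [CommMonoid M] {n : ℕ} (c b : M) (s : Finset (Fin (n + 1))) :
    ∏ i ∈ s, (if i = 0 then c else 1) * b = (if 0 ∈ s then c else 1) * b ^ s.card := by
  rw [prod_mul_distrib, prod_ite_eq', prod_const]

theorem WeaklyAbsorbing.pow_mem_or_mul_pow_mem {R : Type*} [CommRing R] {n : ℕ} {I : Ideal R}
    (hI : WeaklyAbsorbing n I) {c b : R} (h0 : c * b ^ (n + 1) ≠ 0) (hmem : c * b ^ (n + 1) ∈ I) :
    b ^ n ∈ I ∨ c * b ^ n ∈ I := by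
  have hprod : ∏ i : Fin (n + 1), (if i = 0 then c else 1) * b = c * b ^ (n + 1) := by
    rw [prod_ite_zero_mul, if_pos (mem_univ 0), card_univ, Fintype.card_fin]
  obtain ⟨j, hj⟩ := hI.2 (fun i => (if i = 0 then c else 1) * b) (hprod ▸ h0) (hprod ▸ hmem)
  rw [prod_ite_zero_mul, card_erase_of_mem (mem_univ j), card_univ, Fintype.card_fin,
    Nat.add_sub_cancel] at hj
  rcases eq_or_ne j 0 with rfl | hj0
  · exact Or.inl (by simpa using hj)
  · exact Or.inr (by simpa [hj0.symm] using hj)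

theorem stmt10_general {R : Type*} [CommRing R] (n : ℕ) (P I : Ideal R)
    (hwp : ∀ a b : R, a * b ≠ 0 → a * b ∈ P → a ∈ P ∨ b ∈ P)
    (hdiv : ∀ x : R, x ∉ P → P < Ideal.span {x})
    (hI : WeaklyAbsorbing n I) (hrad : I.radical = P) :
    WeaklyPrimary I := by
  refine ⟨hI.1, fun a b hab0 habI => or_iff_not_imp_right.2 fun hb => ?_⟩
  have hIP : I ≤ P := hrad ▸ Ideal.le_radical
  have ha : a ∈ P := (hwp a b hab0 (hIP habI)).resolve_right (hrad ▸ hb)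
  have hbn : b ^ n ∉ P := hrad ▸ fun h => hb (Ideal.mem_radical_of_pow_mem h)
  obtain ⟨c, rfl⟩ := Ideal.mem_span_singleton'.1 ((hdiv _ hbn).le ha)
  rw [mul_assoc, ← pow_succ] at hab0 habI
  exact (hI.pow_mem_or_mul_pow_mem hab0 habI).resolve_left fun h => hbn (hIP h)

theorem stmt10 {R : Type*} [CommRing R] (n : ℕ) (hn : 0 < n) (P I : Ideal R)
    (hP : P ≠ ⊤) (hwp : ∀ a b : R, a * b ≠ 0 → a * b ∈ P → a ∈ P ∨ b ∈ P)
    (hdiv : ∀ x : R, x ∉ P → P < Ideal.span {x})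
    (hI : WeaklyAbsorbing n I) (hrad : I.radical = P) :
    WeaklyPrimary I :=
  stmt10_general n P I hwp hdiv hI hrad
end

section
/- Let I be a weakly n-absorbing ideal of a commutative ring R and suppose (a₁,…,a_{n+1}) is an (n+1)-tuple-zero of I. Then for every choice of indices 1 ≤ α₁ < α₂ < ⋯ < α_m ≤ n+1 with 1 ≤ m ≤ n, the product of the remaining a_i's (those with index outside {α₁,…,α_m}) times Iᵐ is zero, i.e., (∏_{i ∉ {α₁,…,α_m}} a_i) · Iᵐ = {0}. -/
open Finset Polynomial

/-!
Perturb the tuple-zero `a` by elements `x i ∈ I` placed at the positions `i ∈ s`. By strong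
induction on `s`, every term of the expansion of `∏ i, (x i + a i)` except the one for `s` itself
vanishes, so the product equals `(∏ i ∈ sᶜ, a i) * ∏ i ∈ s, x i`, an element of `I`. If it were
nonzero, weak absorption would put some `n`-fold subproduct of `x + a` in `I`, and since
`x + a ≡ a` modulo `I` the same subproduct of `a` would lie in `I`. Spanning `I ^ s.card` by such
products `∏ i ∈ s, x i` gives the theorem.
-/

section
variable {R : Type*} [CommRing R]

theorem Ideal.prod_mem_iff_of_sub_mem {ι : Type*} {I : Ideal R} {a b : ι → R}
    (h : ∀ i, b i - a i ∈ I) (t : Finset ι) : ∏ i ∈ t, b i ∈ I ↔ ∏ i ∈ t, a i ∈ I := by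
  have hmk : Ideal.Quotient.mk I (∏ i ∈ t, b i) = Ideal.Quotient.mk I (∏ i ∈ t, a i) := by
    simp only [map_prod, Ideal.Quotient.eq.mpr (h _)]
  rw [← Ideal.Quotient.eq_zero_iff_mem, hmk, Ideal.Quotient.eq_zero_iff_mem]

theorem Ideal.mul_eq_zero_of_mem_pow_card {ι : Type*} {I : Ideal R} {c : R} {s : Finset ι}
    (h : ∀ x : ι → R, (∀ i ∈ s, x i ∈ I) → c * ∏ i ∈ s, x i = 0) {y : R}
    (hy : y ∈ I ^ s.card) : c * y = 0 := by
  suffices I ^ s.card ≤ LinearMap.ker (LinearMap.mulLeft R c) from this hy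
  rw [← prod_const, ← I.span_eq, Ideal.prod_span, Ideal.span_le]
  intro z hz
  obtain ⟨x, hx, rfl⟩ := (Set.mem_finsetProd _ _ _).mp hz
  exact h x fun i hi => hx hi

theorem WeaklyAbsorbing.compl_prod_mul_prod_eq_zero {n : ℕ} {I : Ideal R}
    (hI : WeaklyAbsorbing n I) {a : Fin (n + 1) → R} (hzero : ∏ i, a i = 0)
    (hnot : ∀ j, ∏ i ∈ univ.erase j, a i ∉ I) (s : Finset (Fin (n + 1)))
    {x : Fin (n + 1) → R} (hx : ∀ i ∈ s, x i ∈ I) :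
    (∏ i ∈ sᶜ, a i) * ∏ i ∈ s, x i = 0 := by
  induction s using Finset.strongInduction generalizing x with
  | H s ih =>
  by_contra hne
  obtain ⟨i₀, hi₀⟩ : s.Nonempty := by
    rw [nonempty_iff_ne_empty]
    rintro rfl
    simp [hzero] at hne
  set y := s.piecewise x 0
  have hy : ∀ i, y i ∈ I := by
    intro i
    by_cases hi : i ∈ s
    · simpa [y, hi] using hx i hi
    · simp [y, hi]
  have hexpand : ∏ i, (y i + a i) = (∏ i ∈ sᶜ, a i) * ∏ i ∈ s, x i := by
    rw [Fintype.prod_add, sum_eq_single s, mul_comm,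
      prod_congr rfl fun i hi => s.piecewise_eq_of_mem x 0 hi]
    · intro t _ hts
      by_cases hsub : t ⊆ s
      · rw [prod_congr rfl fun i hi => s.piecewise_eq_of_mem x 0 (hsub hi), mul_comm]
        exact ih t (Finset.ssubset_iff_subset_ne.mpr ⟨hsub, hts⟩) fun i hi => hx i (hsub hi)
      · obtain ⟨i, hit, his⟩ := not_subset.mp hsub
        rw [prod_eq_zero hit (s.piecewise_eq_of_notMem x 0 his), zero_mul]
    · exact fun h => (h (mem_univ s)).elim
  have hmem : ∏ i, (y i + a i) ∈ I := hexpand ▸ I.mul_mem_left _ (I.prod_mem hi₀ (hx i₀ hi₀))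
  obtain ⟨j, hj⟩ := hI.2 _ (hexpand ▸ hne) hmem
  exact hnot j ((Ideal.prod_mem_iff_of_sub_mem (fun i => by simpa using hy i) _).mp hj)

end

theorem stmt11_general {R : Type*} [CommRing R] (n : ℕ) (I : Ideal R)
    (hI : WeaklyAbsorbing n I) (a : Fin (n + 1) → R)
    (hzero : ∏ i, a i = 0)
    (hnot : ∀ j : Fin (n + 1), (∏ i ∈ univ.erase j, a i) ∉ I) :
    ∀ s : Finset (Fin (n + 1)), 1 ≤ s.card → s.card ≤ n →
      ∀ y ∈ I ^ s.card, (∏ i ∈ sᶜ, a i) * y = 0 :=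
  fun s _ _ _ hy =>
    Ideal.mul_eq_zero_of_mem_pow_card (fun _ hx => hI.compl_prod_mul_prod_eq_zero hzero hnot s hx) hy

theorem stmt11 {R : Type*} [CommRing R] (n : ℕ) (hn : 0 < n) (I : Ideal R)
    (hI : WeaklyAbsorbing n I) (a : Fin (n + 1) → R)
    (hzero : ∏ i, a i = 0)
    (hnot : ∀ j : Fin (n + 1), (∏ i ∈ univ.erase j, a i) ∉ I) :
    ∀ s : Finset (Fin (n + 1)), 1 ≤ s.card → s.card ≤ n →
      ∀ y ∈ I ^ s.card, (∏ i ∈ sᶜ, a i) * y = 0 :=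
  stmt11_general n I hI a hzero hnot
end

section
/- Let I be a weakly n-absorbing ideal of a commutative ring R that is not an n-absorbing ideal. Then I^{n+1} = {0}. -/
open Finset Polynomial

/-!
Since `I` is not `n`-absorbing there are `a₀, …, aₙ` with `∏ aᵢ ∈ I` but no
product of `n` of them in `I`; weak absorption forces `∏ aᵢ = 0`. For `xᵢ ∈ I` and a set `S` of
indices, the mixed product `∏_{i ∈ S} xᵢ · ∏_{i ∉ S} aᵢ` vanishes, by strong induction on `S`:
perturbing `aᵢ` to `aᵢ + xᵢ` for `i ∈ S` changes no product modulo `I`, and after expanding,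
the IH kills every term except the mixed product of `S`. If that were nonzero, weak absorption
applied to the perturbed tuple would put a product of `n` of the `aᵢ` into `I`. With `S` the
full index set, every product of `n + 1` elements of `I` is zero.
-/

theorem Ideal.pow_eq_bot_of_prod_eq_zero {R : Type*} [CommRing R] {I : Ideal R} {m : ℕ}
    (h : ∀ x : Fin m → R, (∀ i, x i ∈ I) → ∏ i, x i = 0) : I ^ m = ⊥ := by
  rw [Submodule.pow_eq_span_pow_set, Submodule.span_eq_bot]
  intro y hy
  obtain ⟨x, rfl⟩ := Set.mem_pow.1 hy
  rw [List.prod_ofFn]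
  exact h (fun i => x i) (fun i => (x i).2)

theorem Ideal.prod_add_sub_prod_mem {ι R : Type*} [CommRing R] {I : Ideal R} (s : Finset ι)
    (a d : ι → R) (hd : ∀ i ∈ s, d i ∈ I) : ∏ i ∈ s, (a i + d i) - ∏ i ∈ s, a i ∈ I := by
  rw [← Ideal.Quotient.eq, map_prod, map_prod]
  refine Finset.prod_congr rfl fun i hi => ?_
  rw [map_add, Ideal.Quotient.eq_zero_iff_mem.2 (hd i hi), add_zero]

theorem Finset.prod_add_ite_mem {ι R : Type*} [Fintype ι] [DecidableEq ι] [CommRing R]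
    (a x : ι → R) (S : Finset ι) :
    ∏ i, (a i + if i ∈ S then x i else 0) =
      ∑ t ∈ S.powerset, (∏ i ∈ t, x i) * ∏ i ∈ univ \ t, a i := by
  simp_rw [add_comm (a _), Finset.prod_add]
  rw [← Finset.sum_subset (Finset.powerset_mono.2 (subset_univ S))]
  · refine Finset.sum_congr rfl fun t ht => ?_
    rw [Finset.prod_congr rfl fun i hi => if_pos (Finset.mem_powerset.1 ht hi)]
  · intro t _ htS
    obtain ⟨i, hit, hiS⟩ := Finset.not_subset.1 (Finset.mem_powerset.not.1 htS)
    rw [Finset.prod_eq_zero hit (if_neg hiS), zero_mul]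

theorem WeaklyAbsorbing.prod_mul_prod_compl_eq_zero {R : Type*} [CommRing R] {n : ℕ}
    {I : Ideal R} (hI : WeaklyAbsorbing n I) {a : Fin (n + 1) → R} (ha : ∏ i, a i = 0)
    (hno : ∀ j, ∏ i ∈ univ.erase j, a i ∉ I) {x : Fin (n + 1) → R} (hx : ∀ i, x i ∈ I)
    (S : Finset (Fin (n + 1))) : (∏ i ∈ S, x i) * ∏ i ∈ univ \ S, a i = 0 := by
  induction S using Finset.strongInduction with
  | _ S ih =>
    obtain rfl | ⟨i₀, hi₀⟩ := S.eq_empty_or_nonempty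
    · simpa using ha
    set b : Fin (n + 1) → R := fun i => a i + if i ∈ S then x i else 0
    have hd : ∀ i, (if i ∈ S then x i else 0) ∈ I := fun i => by
      split_ifs
      exacts [hx i, I.zero_mem]
    have hb : ∏ i, b i = (∏ i ∈ S, x i) * ∏ i ∈ univ \ S, a i := by
      rw [Finset.prod_add_ite_mem, Finset.sum_eq_single_of_mem S (Finset.mem_powerset_self S)]
      exact fun t ht hne => ih t (ssubset_of_subset_of_ne (Finset.mem_powerset.1 ht) hne)
    by_contra hne
    have hmem : ∏ i, b i ∈ I := by
      rw [hb, ← Finset.mul_prod_erase S x hi₀, mul_assoc]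
      exact I.mul_mem_right _ (hx i₀)
    obtain ⟨j, hj⟩ := hI.2 b (hb ▸ hne) hmem
    exact hno j <| (Submodule.sub_mem_iff_right I hj).1 <|
      Ideal.prod_add_sub_prod_mem _ a _ fun i _ => hd i

theorem stmt12_general {R : Type*} [CommRing R] (n : ℕ) (I : Ideal R)
    (hI : WeaklyAbsorbing n I) (hna : ¬ Absorbing n I) :
    I ^ (n + 1) = ⊥ := by
  obtain ⟨a, haI, hno⟩ : ∃ a : Fin (n + 1) → R,
      ∏ i, a i ∈ I ∧ ∀ j, ∏ i ∈ univ.erase j, a i ∉ I := by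
    simpa [Absorbing, hI.1] using hna
  have ha : ∏ i, a i = 0 := by
    by_contra hne
    obtain ⟨j, hj⟩ := hI.2 a hne haI
    exact hno j hj
  refine Ideal.pow_eq_bot_of_prod_eq_zero fun x hx => ?_
  simpa using hI.prod_mul_prod_compl_eq_zero ha hno hx univ

theorem stmt12 {R : Type*} [CommRing R] (n : ℕ) (hn : 0 < n) (I : Ideal R)
    (hI : WeaklyAbsorbing n I) (hna : ¬ Absorbing n I) :
    I ^ (n + 1) = ⊥ :=
  stmt12_general n I hI hna
end

section
/- Let I be a weakly n-absorbing ideal of a commutative ring R that is not an n-absorbing ideal. Then √I = Nil(R), the nilradical of R. -/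
open Finset Polynomial

/-!
Since `I` is not `n`-absorbing, some `x₁, …, xₙ₊₁` has product in `I` but no product of `n` of
them in `I`; weak absorption forces `∏ xᵢ = 0`. For `cᵢ ∈ I`, strong induction on `S` gives
`∏_{i ∈ S} cᵢ * ∏_{i ∉ S} xᵢ = 0`: perturbing `xᵢ` by `cᵢ` for `i ∈ S` and expanding, the
induction hypothesis kills every term but this one, so if it were nonzero the perturbed product
would be a nonzero element of `I`; some `n` of its factors then multiply into `I`, and modulo `I`
that product is the corresponding product of the `xᵢ`. With `S = univ` and all `cᵢ = a ∈ I`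
this says `a ^ (n + 1) = 0`, so `I ⊆ Nil(R)`.
-/

namespace Ideal

variable {R ι : Type*} [CommRing R]

theorem prod_add_sub_prod_mem_s13 (I : Ideal R) (s : Finset ι) {d : ι → R} (x : ι → R)
    (hd : ∀ i ∈ s, d i ∈ I) : ∏ i ∈ s, (d i + x i) - ∏ i ∈ s, x i ∈ I := by
  rw [← Quotient.eq, map_prod, map_prod]
  refine Finset.prod_congr rfl fun i hi => ?_
  rw [map_add, Quotient.eq_zero_iff_mem.mpr (hd i hi), zero_add]

end Ideal

namespace Finset

variable {R ι : Type*} [CommSemiring R] [Fintype ι] [DecidableEq ι]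

theorem prod_piecewise_zero_add_eq_sum (S : Finset ι) (c x : ι → R) :
    ∏ i, (S.piecewise c 0 i + x i) = ∑ t ∈ S.powerset, (∏ i ∈ t, c i) * ∏ i ∈ univ \ t, x i := by
  rw [prod_add, ← sum_subset (powerset_mono.mpr (subset_univ S))]
  · refine sum_congr rfl fun t ht => ?_
    rw [prod_congr rfl fun i hi => S.piecewise_eq_of_mem c 0 (mem_powerset.mp ht hi)]
  · intro t _ htS
    obtain ⟨i, hit, hiS⟩ := not_subset.mp (mt mem_powerset.mpr htS)
    rw [prod_eq_zero hit (S.piecewise_eq_of_notMem c 0 hiS), zero_mul]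

end Finset

namespace WeaklyAbsorbing

variable {R : Type*} [CommRing R] {n : ℕ} {I : Ideal R}

theorem prod_mul_prod_sdiff_eq_zero (hI : WeaklyAbsorbing n I) {x : Fin (n + 1) → R}
    (hx : ∏ i, x i = 0) (hxe : ∀ j, ∏ i ∈ univ.erase j, x i ∉ I) {c : Fin (n + 1) → R}
    (hc : ∀ i, c i ∈ I) (S : Finset (Fin (n + 1))) :
    (∏ i ∈ S, c i) * ∏ i ∈ univ \ S, x i = 0 := by
  induction S using Finset.strongInduction with
  | _ S ih =>
  obtain rfl | ⟨i₀, hi₀⟩ := S.eq_empty_or_nonempty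
  · simpa using hx
  by_contra hne
  set y : Fin (n + 1) → R := fun i => S.piecewise c 0 i + x i
  have hy : ∏ i, y i = (∏ i ∈ S, c i) * ∏ i ∈ univ \ S, x i := by
    rw [prod_piecewise_zero_add_eq_sum, sum_eq_single_of_mem S (mem_powerset_self S)]
    intro t ht htS
    exact ih t (ssubset_of_subset_of_ne (mem_powerset.mp ht) htS)
  have hyI : ∏ i, y i ∈ I := hy ▸ I.mul_mem_right _ (I.prod_mem hi₀ (hc i₀))
  obtain ⟨j, hj⟩ := hI.2 y (hy ▸ hne) hyI
  have hpiece : ∀ i ∈ univ.erase j, S.piecewise c 0 i ∈ I := fun i _ => by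
    by_cases hi : i ∈ S
    · simpa [hi] using hc i
    · simp [hi]
  exact hxe j (sub_sub_cancel (∏ i ∈ univ.erase j, y i) (∏ i ∈ univ.erase j, x i) ▸
    I.sub_mem hj (I.prod_add_sub_prod_mem_s13 _ x hpiece))

theorem prod_eq_zero_of_not_absorbing (hI : WeaklyAbsorbing n I) (hna : ¬ Absorbing n I)
    {c : Fin (n + 1) → R} (hc : ∀ i, c i ∈ I) : ∏ i, c i = 0 := by
  obtain ⟨x, hxI, hxe⟩ : ∃ x : Fin (n + 1) → R, ∏ i, x i ∈ I ∧
      ∀ j, ∏ i ∈ univ.erase j, x i ∉ I := by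
    simpa [Absorbing, hI.1] using hna
  have hx : ∏ i, x i = 0 := by
    by_contra hx
    obtain ⟨j, hj⟩ := hI.2 x hx hxI
    exact hxe j hj
  simpa using hI.prod_mul_prod_sdiff_eq_zero hx hxe hc univ

theorem le_nilradical_of_not_absorbing (hI : WeaklyAbsorbing n I) (hna : ¬ Absorbing n I) :
    I ≤ nilradical R := fun a ha =>
  ⟨n + 1, by simpa using hI.prod_eq_zero_of_not_absorbing hna fun _ => ha⟩

end WeaklyAbsorbing

theorem stmt13_general {R : Type*} [CommRing R] (n : ℕ) (I : Ideal R)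
    (hI : WeaklyAbsorbing n I) (hna : ¬ Absorbing n I) :
    I.radical = nilradical R :=
  le_antisymm (Ideal.radical_le_radical_iff.mpr (hI.le_nilradical_of_not_absorbing hna))
    (Ideal.radical_mono bot_le)

theorem stmt13 {R : Type*} [CommRing R] (n : ℕ) (hn : 0 < n) (I : Ideal R)
    (hI : WeaklyAbsorbing n I) (hna : ¬ Absorbing n I) :
    I.radical = nilradical R :=
  stmt13_general n I hI hna
end

section
/- Let R be a commutative ring and let I be a weakly n-absorbing ideal of R that is not an n-absorbing ideal. If w ∈ Nil(R), then either wⁿ ∈ I or w^{n-i}·I^{i+1} = {0} for every 0 ≤ i ≤ n−1. -/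
open Finset Polynomial

/-!
If `w ^ n ∉ I`, the least `m` with `w ^ m ∈ I` (it exists as `w` is nilpotent) exceeds `n`.
Every product of `n + 1` factors `w ^ eⱼ + xⱼ` with `xⱼ ∈ I`, `eⱼ ≥ 1` and `∑ eⱼ = m` that lies
in `I` is zero: modulo `I`, dropping a factor leaves `w ^ (m - eⱼ) ∉ I`. With all `xⱼ = 0` this
gives `w ^ m = 0`. For `x₁, …, xₖ ∈ I` the factors `w ^ (m - n) + x₁, w + x₂, …, w + xₖ, w, …, w`
have product `w ^ (n + 1 - k) x₁ ⋯ xₖ`: the term `w ^ m` vanishes, and by induction on `k` so do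
the mixed ones. Hence `w ^ (n + 1 - k) I ^ k = 0`.
-/

section

variable {R : Type*} [CommRing R] {I : Ideal R}

theorem Ideal.pow_card_le_of_forall_prod_mem {ι : Type*} (s : Finset ι) {J : Ideal R}
    (h : ∀ x : ι → R, (∀ j ∈ s, x j ∈ I) → ∏ j ∈ s, x j ∈ J) : I ^ #s ≤ J := by
  rw [← prod_const, ← I.span_eq, Ideal.prod_span, Ideal.span_le]
  intro y hy
  obtain ⟨x, hx, rfl⟩ := (Set.mem_finsetProd _ _ _).1 hy
  exact h x fun j hj => hx hj

theorem prod_pow_add_mem_iff {ι : Type*} (s : Finset ι) (w : R) (e : ι → ℕ) {x : ι → R}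
    (hx : ∀ j ∈ s, x j ∈ I) : ∏ j ∈ s, (w ^ e j + x j) ∈ I ↔ w ^ ∑ j ∈ s, e j ∈ I := by
  simp only [← Ideal.Quotient.eq_zero_iff_mem, map_prod, map_add, map_pow]
  rw [prod_congr rfl fun j hj => by rw [Ideal.Quotient.eq_zero_iff_mem.2 (hx j hj), add_zero],
    prod_pow_eq_pow_sum]

theorem prod_add_eq_prod_add_sum {ι : Type*} [DecidableEq ι] (s : Finset ι) (a b : ι → R) :
    ∏ j ∈ s, (a j + b j) =
      ∏ j ∈ s, b j + ∑ t ∈ s.powerset.erase ∅, (∏ j ∈ t, a j) * ∏ j ∈ s \ t, b j := by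
  rw [prod_add, ← add_sum_erase _ _ (empty_mem_powerset s)]
  simp

theorem prod_pow_add_ite_mem {ι : Type*} [Fintype ι] [DecidableEq ι] (s : Finset ι) (w : R)
    {e : ι → ℕ} (he : ∀ j ∉ s, e j = 1) (x : ι → R) :
    ∏ j, (w ^ e j + if j ∈ s then x j else 0) = w ^ sᶜ.card * ∏ j ∈ s, (w ^ e j + x j) := by
  rw [← prod_compl_mul_prod s]
  congr 1
  · rw [← prod_const]
    refine prod_congr rfl fun j hj => ?_
    rw [mem_compl] at hj
    simp [hj, he j hj]
  · exact prod_congr rfl fun j hj => by simp [hj]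

variable {n m : ℕ} {w : R}

theorem WeaklyAbsorbing.prod_pow_add_eq_zero (hI : WeaklyAbsorbing n I)
    (hmin : ∀ k < m, w ^ k ∉ I) {e : Fin (n + 1) → ℕ} (he : ∑ j, e j = m) (he_pos : ∀ j, 0 < e j)
    {x : Fin (n + 1) → R} (hx : ∀ j, x j ∈ I) (hmem : ∏ j, (w ^ e j + x j) ∈ I) :
    ∏ j, (w ^ e j + x j) = 0 := by
  by_contra hne
  obtain ⟨j, hj⟩ := hI.2 _ hne hmem
  rw [prod_pow_add_mem_iff _ w e fun j _ => hx j] at hj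
  have := add_sum_erase univ e (mem_univ j)
  exact hmin _ (by have := he_pos j; omega) hj

theorem WeaklyAbsorbing.pow_eq_zero_of_forall_lt (hI : WeaklyAbsorbing n I) (hnm : n < m)
    (hmin : ∀ k < m, w ^ k ∉ I) (hm : w ^ m ∈ I) : w ^ m = 0 := by
  have he : ∑ j : Fin (n + 1), (1 + if j = 0 then m - n - 1 else 0) = m := by
    simp only [sum_add_distrib, sum_const, card_univ, Fintype.card_fin, smul_eq_mul, mul_one,
      sum_ite_eq', mem_univ, ↓reduceIte]
    omega
  have := hI.prod_pow_add_eq_zero hmin he (fun j => by omega) (x := 0) (fun _ => I.zero_mem)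
    (by simpa [prod_pow_eq_pow_sum, he] using hm)
  simpa [prod_pow_eq_pow_sum, he] using this

theorem WeaklyAbsorbing.pow_mul_prod_eq_zero (hI : WeaklyAbsorbing n I) (hnm : n < m)
    (hmin : ∀ k < m, w ^ k ∉ I) (hm : w ^ m = 0) {x : Fin (n + 1) → R}
    (s : Finset (Fin (n + 1))) (hs : s.Nonempty) (hx : ∀ j ∈ s, x j ∈ I) :
    w ^ (n + 1 - #s) * ∏ j ∈ s, x j = 0 := by
  classical
  induction s using Finset.strongInduction with
  | H s ih =>
  obtain ⟨j₀, hj₀⟩ := hs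
  set e : Fin (n + 1) → ℕ := fun j => 1 + if j = j₀ then m - n - 1 else 0
  have he : ∀ t : Finset (Fin (n + 1)), ∑ j ∈ t, e j = #t + if j₀ ∈ t then m - n - 1 else 0 :=
    fun t => by simp [e, sum_add_distrib]
  have hs_card : #s ≤ n + 1 := by simpa using card_le_univ s
  have hcross : ∀ t ∈ s.powerset.erase ∅,
      w ^ (n + 1 - #s) * ((∏ j ∈ t, w ^ e j) * ∏ j ∈ s \ t, x j) = 0 := by
    intro t ht
    obtain ⟨ht_ne, ht_sub⟩ := mem_erase.1 ht
    rw [mem_powerset] at ht_sub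
    rw [prod_pow_eq_pow_sum, ← mul_assoc, ← pow_add, he]
    by_cases hts : t = s
    · subst hts
      rw [if_pos hj₀, show n + 1 - #t + (#t + (m - n - 1)) = m by omega, hm, zero_mul]
    · have hsub : s \ t ⊂ s := sdiff_ssubset ht_sub (nonempty_iff_ne_empty.2 ht_ne)
      have hne : (s \ t).Nonempty := sdiff_nonempty.2 fun h => hts (ht_sub.antisymm h)
      refine pow_mul_eq_zero_of_le ?_ (ih _ hsub hne fun j hj => hx j (sdiff_subset hj))
      rw [card_sdiff_of_subset ht_sub]
      have := card_le_card ht_sub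
      omega
  have hprod : ∏ j, (w ^ e j + if j ∈ s then x j else 0) = w ^ (n + 1 - #s) * ∏ j ∈ s, x j := by
    rw [prod_pow_add_ite_mem s w (fun j hj => by simp [e, ne_of_mem_of_not_mem hj₀ hj |>.symm]) x,
      card_compl, Fintype.card_fin, prod_add_eq_prod_add_sum, mul_add, mul_sum,
      sum_eq_zero hcross, add_zero]
  rw [← hprod]
  refine hI.prod_pow_add_eq_zero hmin ?_ (fun j => by simp [e])
    (fun j => by split_ifs with hj; exacts [hx j hj, I.zero_mem]) ?_
  · rw [he, if_pos (mem_univ _), card_univ, Fintype.card_fin]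
    omega
  · rw [hprod]
    exact I.mul_mem_left _ (I.prod_mem hj₀ (hx j₀ hj₀))

theorem WeaklyAbsorbing.pow_mul_eq_zero_of_mem_pow (hI : WeaklyAbsorbing n I)
    (hw : IsNilpotent w) (hwn : w ^ n ∉ I) {k : ℕ} (hk : 0 < k) (hkn : k ≤ n + 1) {y : R}
    (hy : y ∈ I ^ k) : w ^ (n + 1 - k) * y = 0 := by
  classical
  have hex : ∃ m, w ^ m ∈ I := let ⟨N, hN⟩ := hw; ⟨N, hN ▸ I.zero_mem⟩
  have hmin : ∀ j < Nat.find hex, w ^ j ∉ I := fun j => Nat.find_min hex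
  have hnm : n < Nat.find hex :=
    lt_of_not_ge fun h => hwn (I.pow_mem_of_pow_mem (Nat.find_spec hex) h)
  have hm := hI.pow_eq_zero_of_forall_lt hnm hmin (Nat.find_spec hex)
  obtain ⟨s, -, rfl⟩ := exists_subset_card_eq (s := (univ : Finset (Fin (n + 1))))
    (by simpa using hkn)
  have hle : I ^ #s ≤ LinearMap.ker (LinearMap.mulLeft R (w ^ (n + 1 - #s))) :=
    Ideal.pow_card_le_of_forall_prod_mem s fun x hx =>
      hI.pow_mul_prod_eq_zero hnm hmin hm s (card_pos.1 hk) hx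
  exact hle hy

end

theorem stmt16_general {R : Type*} [CommRing R] (n : ℕ) (I : Ideal R)
    (hI : WeaklyAbsorbing n I)
    (w : R) (hw : w ∈ nilradical R) :
    w ^ n ∈ I ∨ ∀ i < n, ∀ y ∈ I ^ (i + 1), w ^ (n - i) * y = 0 := by
  refine or_iff_not_imp_left.2 fun hwn i hi y hy => ?_
  have := hI.pow_mul_eq_zero_of_mem_pow (mem_nilradical.1 hw) hwn (Nat.succ_pos i) (by omega) hy
  rwa [show n + 1 - (i + 1) = n - i by omega] at this

theorem stmt16 {R : Type*} [CommRing R] (n : ℕ) (hn : 0 < n) (I : Ideal R)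
    (hI : WeaklyAbsorbing n I) (hna : ¬ Absorbing n I)
    (w : R) (hw : w ∈ nilradical R) :
    w ^ n ∈ I ∨ ∀ i < n, ∀ y ∈ I ^ (i + 1), w ^ (n - i) * y = 0 :=
  stmt16_general n I hI w hw
end

section
/- Let R be a commutative ring and x₁,…,x_{n+1} ∈ Jac(R), the Jacobson radical of R. Then the principal ideal x₁⋯x_{n+1}R is a weakly n-absorbing ideal of R if and only if x₁⋯x_{n+1} = 0. -/
open Finset Polynomial

/-!
Let `p = x_1 ⋯ x_{n+1} = x_j q`. If `q ∈ pR`, then `q = x_j q c`, so `q (1 - x_j c) = 0`, and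
`1 - x_j c` is a unit because `x_j` lies in the Jacobson radical; hence `q = 0` and `p = 0`.
So for `p ≠ 0` the factorisation of `p` itself violates weak `n`-absorption, while for `p = 0`
the ideal `pR = 0` is weakly `n`-absorbing vacuously.
-/

theorem eq_zero_of_mem_span_mul_of_mem_jacobson_bot {R : Type*} [CommRing R] {a b : R}
    (ha : a ∈ Ideal.jacobson (⊥ : Ideal R)) (hb : b ∈ Ideal.span {a * b}) : b = 0 := by
  obtain ⟨c, hc⟩ := Ideal.mem_span_singleton'.mp hb
  have hunit : IsUnit (a * -c + 1) := Ideal.mem_jacobson_bot.mp ha (-c)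
  exact hunit.mul_left_eq_zero.mp (by linear_combination -hc)

theorem weaklyAbsorbing_bot {R : Type*} [CommRing R] [Nontrivial R] (n : ℕ) :
    WeaklyAbsorbing n (⊥ : Ideal R) :=
  ⟨bot_ne_top, fun _ hne hmem => absurd ((Submodule.mem_bot R).mp hmem) hne⟩

theorem stmt17_general {R : Type*} [CommRing R] [Nontrivial R] (n : ℕ)
    (x : Fin (n + 1) → R) (hx : ∀ i, x i ∈ Ideal.jacobson (⊥ : Ideal R)) :
    WeaklyAbsorbing n (Ideal.span {∏ i, x i}) ↔ ∏ i, x i = 0 := by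
  constructor
  · rintro ⟨-, habsorb⟩
    by_contra hne
    obtain ⟨j, hj⟩ := habsorb x hne (Ideal.mem_span_singleton_self _)
    rw [← mul_prod_erase univ x (mem_univ j)] at hj hne
    exact hne (by rw [eq_zero_of_mem_span_mul_of_mem_jacobson_bot (hx j) hj, mul_zero])
  · intro hzero
    rw [hzero, Ideal.span_singleton_eq_bot.mpr rfl]
    exact weaklyAbsorbing_bot n

theorem stmt17 {R : Type*} [CommRing R] [Nontrivial R] (n : ℕ) (hn : 0 < n)
    (x : Fin (n + 1) → R) (hx : ∀ i, x i ∈ Ideal.jacobson (⊥ : Ideal R)) :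
    WeaklyAbsorbing n (Ideal.span {∏ i, x i}) ↔ ∏ i, x i = 0 :=
  stmt17_general n x hx
end

section
/- Let (R, M) be a quasi-local (local) commutative ring and n a positive integer. Then every proper ideal of R is a weakly n-absorbing ideal of R if and only if M^{n+1} = {0}. -/
open Finset Polynomial

/-! If `M ^ (n + 1) = 0`, a nonzero product of `n + 1` elements has a factor outside `M`, i.e. a
unit, which can be cancelled. Conversely, if `x₁, …, xₙ₊₁ ∈ M` have nonzero product `p`,
applying weak `n`-absorption to `(p)` gives some `q = ∏_{i ≠ j} xᵢ ∈ (xⱼ q)`; since `1 - r xⱼ` is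
a unit this forces `q = 0`, hence `p = 0`. -/

namespace Ideal

variable {R : Type*} [CommRing R]

theorem pow_le_iff_forall_prod_mem {I J : Ideal R} {k : ℕ} :
    I ^ k ≤ J ↔ ∀ a : Fin k → R, (∀ i, a i ∈ I) → ∏ i, a i ∈ J := by
  refine ⟨fun h a ha => h ?_, fun h => ?_⟩
  · simpa using prod_mem_prod (s := univ) fun i _ => ha i
  · rw [Submodule.pow_eq_span_pow_set, Submodule.span_le]
    rintro _ hx
    obtain ⟨a, rfl⟩ := Set.mem_pow.mp hx
    rw [Fin.prod_ofFn]
    exact h _ fun i => (a i).2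

theorem prod_erase_mem_of_isUnit {ι : Type*} [DecidableEq ι] {I : Ideal R} {s : Finset ι}
    {a : ι → R} {j : ι} (hj : j ∈ s) (hu : IsUnit (a j)) (h : ∏ i ∈ s, a i ∈ I) :
    ∏ i ∈ s.erase j, a i ∈ I := by
  rwa [← mul_prod_erase s a hj, unit_mul_mem_iff_mem I hu] at h

end Ideal

namespace IsLocalRing

variable {R : Type*} [CommRing R] [IsLocalRing R]

theorem eq_zero_of_mem_span_mul {x q : R} (hx : x ∈ maximalIdeal R)
    (h : q ∈ Ideal.span {x * q}) : q = 0 := by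
  obtain ⟨r, hr⟩ := Ideal.mem_span_singleton'.mp h
  have hu : IsUnit (1 - r * x) :=
    isUnit_one_sub_self_of_mem_nonunits _ ((maximalIdeal R).mul_mem_left r hx)
  exact hu.mul_left_eq_zero.mp (by linear_combination -hr)

theorem prod_eq_zero_of_forall_weaklyAbsorbing {n : ℕ}
    (h : ∀ I : Ideal R, I ≠ ⊤ → WeaklyAbsorbing n I) (a : Fin (n + 1) → R)
    (ha : ∀ i, a i ∈ maximalIdeal R) : ∏ i, a i = 0 := by
  by_contra hne
  have hproper : Ideal.span {∏ i, a i} ≠ ⊤ := by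
    rw [Ne, Ideal.span_singleton_eq_top, ← notMem_maximalIdeal, not_not]
    exact (maximalIdeal R).prod_mem (mem_univ 0) (ha 0)
  obtain ⟨j, hj⟩ := (h _ hproper).2 a hne (Ideal.mem_span_singleton_self _)
  rw [← mul_prod_erase univ a (mem_univ j)] at hne hj
  exact hne (by rw [eq_zero_of_mem_span_mul (ha j) hj, mul_zero])

theorem weaklyAbsorbing_of_maximalIdeal_pow_eq_bot {n : ℕ}
    (h : maximalIdeal R ^ (n + 1) = ⊥) {I : Ideal R} (hI : I ≠ ⊤) : WeaklyAbsorbing n I := by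
  refine ⟨hI, fun a hne hmem => ?_⟩
  obtain ⟨j, hj⟩ : ∃ j, a j ∉ maximalIdeal R := by
    by_contra! hall
    have := Ideal.pow_le_iff_forall_prod_mem.mp le_rfl a hall
    exact hne (by rwa [h, Ideal.mem_bot] at this)
  exact ⟨j, Ideal.prod_erase_mem_of_isUnit (mem_univ j) (notMem_maximalIdeal.mp hj) hmem⟩

end IsLocalRing

theorem stmt18_general {R : Type*} [CommRing R] [IsLocalRing R] (n : ℕ) :
    (∀ I : Ideal R, I ≠ ⊤ → WeaklyAbsorbing n I) ↔
      (IsLocalRing.maximalIdeal R) ^ (n + 1) = ⊥ := by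
  refine ⟨fun h => le_bot_iff.mp (Ideal.pow_le_iff_forall_prod_mem.mpr fun a ha => ?_),
    fun h _ hI => IsLocalRing.weaklyAbsorbing_of_maximalIdeal_pow_eq_bot h hI⟩
  exact Ideal.mem_bot.mpr (IsLocalRing.prod_eq_zero_of_forall_weaklyAbsorbing h a ha)

theorem stmt18 {R : Type*} [CommRing R] [IsLocalRing R] (n : ℕ) (hn : 0 < n) :
    (∀ I : Ideal R, I ≠ ⊤ → WeaklyAbsorbing n I) ↔
      (IsLocalRing.maximalIdeal R) ^ (n + 1) = ⊥ :=
  stmt18_general n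
end

section
/- Let R₁,…,R_{n+1} be commutative rings with identity and R = R₁ × ⋯ × R_{n+1}. Then every proper ideal of R is a weakly n-absorbing ideal of R if and only if each R_i is a field. -/
open Finset Polynomial

/-!
In a finite product of rings every ideal is a product `Ideal.pi J` of ideals of the factors.
If every factor is a field, each `J i` is `⊥` or `⊤`. Unless `I = 0`, at most `n` coordinates
have `J i = ⊥`, and for each of them one of the `a_j` vanishes there; by pigeonhole some `a_j`
is never needed, so the product of the others still lies in `I`.
Conversely, if `R k` has an ideal `0 < J < R k`, then `0 × ⋯ × J × ⋯ × 0` is not weakly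
`n`-absorbing: a nonzero `x` in it is the product of the `n + 1` elements
`(1, …, 1, x_j, 1, …, 1)`, and omitting the `j`-th one leaves an element with `j`-th
coordinate `1`.
-/

namespace Ideal

section Semiring

variable {ι : Type*} {R : ι → Type*} [∀ i, Semiring (R i)] {J : ∀ i, Ideal (R i)}

theorem pi_eq_top_iff : pi J = ⊤ ↔ ∀ i, J i = ⊤ := by
  simp only [eq_top_iff_one, mem_pi, Pi.one_apply]

theorem pi_eq_bot_iff : pi J = ⊥ ↔ ∀ i, J i = ⊥ := by
  have pi_bot : pi (fun i => (⊥ : Ideal (R i))) = ⊥ := by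
    ext; simp [mem_pi, funext_iff]
  rw [← pi_bot, le_antisymm_iff, pi_le_pi_iff, pi_le_pi_iff, ← le_antisymm_iff, funext_iff]

end Semiring

theorem exists_prod_erase_mem_pi {ι κ : Type*} [Fintype κ] [DecidableEq κ]
    {R : ι → Type*} [∀ i, CommSemiring (R i)] {J : ∀ i, Ideal (R i)} {S : Finset ι}
    (hprime : ∀ i ∈ S, (J i).IsPrime) (htop : ∀ i ∉ S, J i = ⊤)
    (hcard : #S < Fintype.card κ) {a : κ → ∀ i, R i} (ha : ∏ j, a j ∈ pi J) :
    ∃ j, ∏ j' ∈ univ.erase j, a j' ∈ pi J := by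
  have hwit : ∀ i ∈ S, ∃ j, a j i ∈ J i := fun i hi => by
    have := hprime i hi
    obtain ⟨j, -, hj⟩ := IsPrime.prod_mem_iff.mp (by simpa only [Finset.prod_apply] using ha i)
    exact ⟨j, hj⟩
  choose f hf using hwit
  obtain ⟨j, -, hj⟩ := exists_mem_notMem_of_card_lt_card (t := univ)
    ((card_image_le (s := S.attach) (f := fun i => f i.1 i.2)).trans_lt (by simpa using hcard))
  refine ⟨j, fun i => ?_⟩
  by_cases hi : i ∈ S
  · have hfi : f i hi ∈ univ.erase j :=
      mem_erase.2 ⟨fun h => hj (mem_image.2 ⟨⟨i, hi⟩, mem_attach _ _, h⟩), mem_univ _⟩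
    rw [Finset.prod_apply]
    exact prod_mem _ hfi (hf i hi)
  · simp [htop i hi]

end Ideal

open Ideal

section

variable {n : ℕ} {R : Fin (n + 1) → Type*} [∀ i, CommRing (R i)]

theorem weaklyAbsorbing_pi_of_card_le {J : ∀ i, Ideal (R i)} {S : Finset (Fin (n + 1))}
    (hprime : ∀ i ∈ S, (J i).IsPrime) (htop : ∀ i ∉ S, J i = ⊤) (hcard : #S ≤ n)
    (hne : pi J ≠ ⊤) : WeaklyAbsorbing n (pi J) :=
  ⟨hne, fun _ _ ha => exists_prod_erase_mem_pi hprime htop (by simpa [Nat.lt_succ_iff]) ha⟩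

theorem not_weaklyAbsorbing_pi {J : ∀ i, Ideal (R i)} (hJ : ∀ i, J i ≠ ⊤) (hbot : pi J ≠ ⊥) :
    ¬ WeaklyAbsorbing n (pi J) := by
  classical
  rintro ⟨-, habs⟩
  obtain ⟨x, hx, hx0⟩ := Submodule.exists_mem_ne_zero_of_ne_bot hbot
  have hprod : ∏ j, Pi.mulSingle j (x j) = x := univ_prod_mulSingle x
  obtain ⟨j, hj⟩ := habs (fun j => Pi.mulSingle j (x j)) (by rwa [hprod]) (by rwa [hprod])
  have hj1 : (∏ i ∈ univ.erase j, Pi.mulSingle i (x i)) j = 1 := by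
    rw [Finset.prod_apply]
    exact prod_eq_one fun i hi => Pi.mulSingle_eq_of_ne (ne_of_mem_erase hi).symm _
  exact hJ j ((J j).eq_top_iff_one.2 (hj1 ▸ hj j))

theorem weaklyAbsorbing_of_isField (hF : ∀ i, IsField (R i)) {I : Ideal (∀ i, R i)}
    (hI : I ≠ ⊤) : WeaklyAbsorbing n I := by
  classical
  set J := fun i => I.map (Pi.evalRingHom R i)
  have hIJ : pi J = I := piOrderIso.symm_apply_apply I
  have hJ : ∀ i, J i = ⊥ ∨ J i = ⊤ := fun i =>
    (Ring.isField_iff_isSimpleOrder_ideal.mp (hF i)).eq_bot_or_eq_top _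
  rw [← hIJ] at hI ⊢
  by_cases hall : ∀ i, J i = ⊥
  · rw [pi_eq_bot_iff.2 hall] at hI ⊢
    exact ⟨hI, fun a h0 ha => absurd (mem_bot.1 ha) h0⟩
  push Not at hall
  obtain ⟨k, hk⟩ := hall
  refine weaklyAbsorbing_pi_of_card_le (S := univ.filter fun i => J i = ⊥) (fun i hi => ?_)
    (fun i hi => (hJ i).resolve_left (by simpa using hi)) ?_ hI
  · rw [(mem_filter.1 hi).2]
    have := (hF i).isDomain
    exact isPrime_bot
  · simpa [Nat.lt_succ_iff] using card_lt_univ_of_notMem (x := k) (by simpa using hk)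

theorem isField_of_forall_weaklyAbsorbing [∀ i, Nontrivial (R i)]
    (h : ∀ I : Ideal (∀ i, R i), I ≠ ⊤ → WeaklyAbsorbing n I) (k : Fin (n + 1)) :
    IsField (R k) := by
  classical
  by_contra hk
  obtain ⟨J, hbot, htop⟩ := Ring.not_isField_iff_exists_ideal_bot_lt_and_lt_top.mp hk
  let J' : ∀ i, Ideal (R i) := Function.update (fun _ => ⊥) k J
  have hJ' : ∀ i, J' i ≠ ⊤ := by
    intro i
    rcases eq_or_ne i k with rfl | hi
    · simpa [J'] using htop.ne
    · simp [J', hi]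
  have hne : pi J' ≠ ⊥ := fun h0 => hbot.ne' (by simpa [J'] using pi_eq_bot_iff.1 h0 k)
  exact not_weaklyAbsorbing_pi hJ' hne (h _ fun h1 => hJ' 0 (pi_eq_top_iff.1 h1 0))

end

theorem stmt19_general (n : ℕ) (A : Fin (n + 1) → Type*)
    [∀ i, CommRing (A i)] [∀ i, Nontrivial (A i)] :
    (∀ I : Ideal (∀ i, A i), I ≠ ⊤ → WeaklyAbsorbing n I) ↔
      ∀ i, IsField (A i) :=
  ⟨isField_of_forall_weaklyAbsorbing, fun hF _ => weaklyAbsorbing_of_isField hF⟩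

theorem stmt19 (n : ℕ) (hn : 0 < n) (A : Fin (n + 1) → Type*)
    [∀ i, CommRing (A i)] [∀ i, Nontrivial (A i)] :
    (∀ I : Ideal (∀ i, A i), I ≠ ⊤ → WeaklyAbsorbing n I) ↔
      ∀ i, IsField (A i) :=
  stmt19_general n A
end
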